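/- Let S be a group and let L and L' be subgroups of S that are elementwise conjugate in S. Let n be a positive integer and let T be a transitive subgroup of the symmetric group Sym(Fin n). Then in the wreath product G = S ≀ T = (Fin n → S) ⋊ T, the subgroups L ≀ T and L' ≀ T are elementwise conjugate: every element of L ≀ T is conjugate in G to some element of L' ≀ T and vice versa. -/

import Mathlib

/-!
Conjugating `(f, t) ∈ S ≀ T` by a base element `(c, 1)` keeps `t` and replaces `f` by
`i ↦ c i * f i * (c (t⁻¹ i))⁻¹`. Choosing `c` cycle by cycle, one moves all of `f` on a cycle of
`t` to a single base point of that cycle, where it becomes the product of the values of `f` along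
the cycle; this lies in `L`, so a further conjugation by a constant on the cycle moves it into
`L'`.
-/

/-- The coordinate-permutation action of `Equiv.Perm α` on `α → S`:
`(σ • f) i = f (σ⁻¹ i)`. -/
def permMulAut (S : Type*) [Group S] (α : Type*) : Equiv.Perm α →* MulAut (α → S) where
  toFun σ :=
    { toFun := fun f => f ∘ σ.symm
      invFun := fun f => f ∘ σ
      left_inv := fun f => by ext i; simp
      right_inv := fun f => by ext i; simp
      map_mul' := fun f g => rfl }
  map_one' := by ext f i; rfl
  map_mul' := fun σ τ => by ext f i; rfl

/-- The wreath product `S ≀ T` for `T` a subgroup of `Equiv.Perm α`, i.e. the semidirect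
product `(α → S) ⋊ T` where `T` permutes coordinates. -/
def Wreath (S : Type*) [Group S] {α : Type*} (T : Subgroup (Equiv.Perm α)) : Type _ :=
  (α → S) ⋊[(permMulAut S α).comp T.subtype] T

instance (S : Type*) [Group S] {α : Type*} (T : Subgroup (Equiv.Perm α)) :
    Group (Wreath S T) :=
  inferInstanceAs (Group ((α → S) ⋊[(permMulAut S α).comp T.subtype] T))

/-- The subgroup `L ≀ T` of `S ≀ T`: pairs `(f, t)` with all values of `f` in `L`. -/
def wreathSub {S : Type*} [Group S] {α : Type*} (L : Subgroup S)
    (T : Subgroup (Equiv.Perm α)) : Subgroup (Wreath S T) where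
  carrier := {g : (α → S) ⋊[(permMulAut S α).comp T.subtype] T | ∀ i, g.left i ∈ L}
  one_mem' := fun i => by
    show (1 : (α → S) ⋊[(permMulAut S α).comp T.subtype] T).left i ∈ L
    simpa using one_mem L
  mul_mem' := by
    intro (a : (α → S) ⋊[(permMulAut S α).comp T.subtype] T) (b : (α → S) ⋊[(permMulAut S α).comp T.subtype] T) ha hb i
    show (a * b).left i ∈ L
    rw [SemidirectProduct.mul_left]
    exact mul_mem (ha i) (hb _)
  inv_mem' := by
    intro (a : (α → S) ⋊[(permMulAut S α).comp T.subtype] T) ha i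
    show (a⁻¹).left i ∈ L
    rw [SemidirectProduct.inv_left]
    exact inv_mem (ha _)

open Equiv

def orbitProd {α S : Type*} [Group S] (f : α → S) (u : α → α) : ℕ → α → S
  | 0, _ => 1
  | k + 1, i => f i * orbitProd f u k (u i)

lemma orbitProd_mem {α S : Type*} [Group S] {L : Subgroup S} {f : α → S} (hf : ∀ i, f i ∈ L)
    (u : α → α) : ∀ k i, orbitProd f u k i ∈ L
  | 0, _ => one_mem L
  | k + 1, i => mul_mem (hf i) (orbitProd_mem hf u k (u i))

/-- `b` picks a base point on each cycle of `u`, and `K i` is the number of steps from `i` to it. -/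
lemma Equiv.Perm.exists_cycle_base {α : Type*} [Finite α] (u : Perm α) :
    ∃ (b : α → α) (K : α → ℕ), (∀ i, b (u i) = b i) ∧
      ∀ i, (K i = 0 ∧ b i = i) ∨ K i = K (u i) + 1 := by
  let b : α → α := fun i => Quotient.out (s := Perm.SameCycle.setoid u) ⟦i⟧
  have hb_sameCycle : ∀ i, u.SameCycle i (b i) := fun i =>
    Quotient.mk_out (s := Perm.SameCycle.setoid u) i |>.symm
  have hb_apply : ∀ i, b (u i) = b i := fun i =>
    congrArg Quotient.out (Quotient.sound (s := Perm.SameCycle.setoid u)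
      (u.sameCycle_apply_left.mpr .rfl))
  have hreach : ∀ i, ∃ k : ℕ, (u ^ k) i = b i := fun i =>
    let ⟨k, _, hk⟩ := (hb_sameCycle i).exists_pow_eq'; ⟨k, hk⟩
  classical
  refine ⟨b, fun i => Nat.find (hreach i), hb_apply, fun i => ?_⟩
  rcases Nat.eq_zero_or_pos (Nat.find (hreach i)) with h0 | hpos
  · refine .inl ⟨h0, ?_⟩
    simpa [h0] using (Nat.find_spec (hreach i)).symm
  · have hle : Nat.find (hreach i) ≤ Nat.find (hreach (u i)) + 1 := Nat.find_le <| by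
      rw [pow_succ, Perm.mul_apply, Nat.find_spec (hreach (u i)), hb_apply]
    have hge : Nat.find (hreach (u i)) ≤ Nat.find (hreach i) - 1 := Nat.find_le <| by
      rw [hb_apply, ← Perm.mul_apply, ← pow_succ, Nat.sub_add_cancel hpos]
      exact Nat.find_spec (hreach i)
    exact .inr (show Nat.find (hreach i) = Nat.find (hreach (u i)) + 1 by omega)

lemma Equiv.Perm.exists_twistedConj_mem {α S : Type*} [Finite α] [Group S] {L L' : Subgroup S}
    (hLL' : ∀ h ∈ L, ∃ k ∈ L', IsConj h k) (u : Perm α) {f : α → S} (hf : ∀ i, f i ∈ L) :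
    ∃ c : α → S, ∀ i, c i * f i * (c (u i))⁻¹ ∈ L' := by
  obtain ⟨b, K, hb, hK⟩ := u.exists_cycle_base
  -- at a base point `j`, `f j * orbitProd f u (K (u j)) (u j)` is the product around its cycle
  choose k hk_mem hk_conj using
    fun j => hLL' _ (mul_mem (hf j) (orbitProd_mem hf u (K (u j)) (u j)))
  choose a ha using fun j => isConj_iff.mp (hk_conj j)
  refine ⟨fun i => a (b i) * (orbitProd f u (K i) i)⁻¹, fun i => ?_⟩
  rcases hK i with ⟨hKi, hbi⟩ | hKi
  · convert hk_mem i using 1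
    dsimp only
    rw [← ha i, hKi, hb, hbi, orbitProd]
    group
  · dsimp only
    rw [hKi, hb, orbitProd]
    convert one_mem L' using 1
    group

lemma wreath_conj_mk_one {S α : Type*} [Group S] {T : Subgroup (Perm α)} (c f : α → S) (t : T) :
    (⟨c, 1⟩ * ⟨f, t⟩ * ⟨c, 1⟩⁻¹ : (α → S) ⋊[(permMulAut S α).comp T.subtype] T) =
      ⟨fun i => c i * f i * (c ((t : Perm α)⁻¹ i))⁻¹, t⟩ := by
  refine SemidirectProduct.ext (funext fun i => ?_) ?_
  · simp only [SemidirectProduct.mul_left, SemidirectProduct.inv_left,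
      SemidirectProduct.mul_right, inv_one, one_mul, map_one, MulAut.one_apply]
    rfl
  · simp

lemma wreathSub_forall_exists_isConj {S α : Type*} [Group S] [Finite α] {L L' : Subgroup S}
    (hLL' : ∀ h ∈ L, ∃ k ∈ L', IsConj h k) (T : Subgroup (Perm α)) :
    ∀ g ∈ wreathSub L T, ∃ g' ∈ wreathSub L' T, IsConj g g' := by
  rintro ⟨f, t⟩ hf
  obtain ⟨c, hc⟩ := (t : Perm α)⁻¹.exists_twistedConj_mem hLL' hf
  exact ⟨SemidirectProduct.mk _ t, hc, isConj_iff.mpr ⟨⟨c, 1⟩, wreath_conj_mk_one c f t⟩⟩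

theorem wreath_elementwiseConj_general {S : Type*} [Group S] (L L' : Subgroup S)
    (hEC : (∀ h ∈ L, ∃ k ∈ L', IsConj h k) ∧ (∀ k ∈ L', ∃ h ∈ L, IsConj k h))
    (n : ℕ) (T : Subgroup (Equiv.Perm (Fin n))) :
    (∀ h ∈ wreathSub L T, ∃ h' ∈ wreathSub L' T, IsConj h h') ∧
    (∀ h' ∈ wreathSub L' T, ∃ h ∈ wreathSub L T, IsConj h' h) :=
  ⟨wreathSub_forall_exists_isConj hEC.1 T, wreathSub_forall_exists_isConj hEC.2 T⟩

/-- If `L` and `L'` are elementwise conjugate subgroups of `S` and `T` is a transitive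
subgroup of `Sym(Fin n)`, then `L ≀ T` and `L' ≀ T` are elementwise conjugate in `S ≀ T`. -/
theorem wreath_elementwiseConj {S : Type*} [Group S] (L L' : Subgroup S)
    (hEC : (∀ h ∈ L, ∃ k ∈ L', IsConj h k) ∧ (∀ k ∈ L', ∃ h ∈ L, IsConj k h))
    (n : ℕ) (hn : 0 < n) (T : Subgroup (Equiv.Perm (Fin n)))
    (hT : ∀ i j : Fin n, ∃ σ ∈ T, σ i = j) :
    (∀ h ∈ wreathSub L T, ∃ h' ∈ wreathSub L' T, IsConj h h') ∧
    (∀ h' ∈ wreathSub L' T, ∃ h ∈ wreathSub L T, IsConj h' h) :=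
  wreath_elementwiseConj_general L L' hEC n T
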